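/- arXiv:math/0008090 — 6 statements merged into one kernel-verified Lean document; each statement's English description precedes it below -/
import Mathlib

section
/- For every nonempty subset A ⊆ I_n and any two elements i, j ∈ A, the equality Σ_{D ⊆ A\{i}} (−1)^{|A|−|D|} z_{D,i} = Σ_{D ⊆ A\{j}} (−1)^{|A|−|D|} z_{D,j} holds in Q_n; i.e., the element u(A) defined by formula (3) does not depend on the choice of i ∈ A. -/
/-- Index type for the generators `z_{A,i}` of `Qₙ`: pairs `(A, i)` with
`A ⊆ Iₙ` and `i ∉ A`. -/
abbrev QIdx (n : ℕ) := {p : Finset (Fin n) × Fin n // p.2 ∉ p.1}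

/-- The defining relations of the algebra `Qₙ`:
additive relations `z_{A∪{i},j} + z_{A,i} = z_{A∪{j},i} + z_{A,j}` and
multiplicative relations `z_{A∪{i},j} · z_{A,i} = z_{A∪{j},i} · z_{A,j}`. -/
inductive QnRel (K : Type*) [Field K] (n : ℕ) :
    FreeAlgebra K (QIdx n) → FreeAlgebra K (QIdx n) → Prop
  | add (A : Finset (Fin n)) (i j : Fin n) (hi : i ∉ A) (hj : j ∉ A) (hij : i ≠ j) :
      QnRel K n
        (FreeAlgebra.ι K (⟨(insert i A, j), by simp [Finset.mem_insert, hij.symm, hj]⟩ : QIdx n)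
          + FreeAlgebra.ι K (⟨(A, i), hi⟩ : QIdx n))
        (FreeAlgebra.ι K (⟨(insert j A, i), by simp [Finset.mem_insert, hij, hi]⟩ : QIdx n)
          + FreeAlgebra.ι K (⟨(A, j), hj⟩ : QIdx n))
  | mul (A : Finset (Fin n)) (i j : Fin n) (hi : i ∉ A) (hj : j ∉ A) (hij : i ≠ j) :
      QnRel K n
        (FreeAlgebra.ι K (⟨(insert i A, j), by simp [Finset.mem_insert, hij.symm, hj]⟩ : QIdx n)
          * FreeAlgebra.ι K (⟨(A, i), hi⟩ : QIdx n))
        (FreeAlgebra.ι K (⟨(insert j A, i), by simp [Finset.mem_insert, hij, hi]⟩ : QIdx n)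
          * FreeAlgebra.ι K (⟨(A, j), hj⟩ : QIdx n))

/-- The algebra `Qₙ`: the quotient of the free associative unital `K`-algebra on the
generators `z_{A,i}` by the two-sided ideal generated by the defining relations. -/
abbrev Qn (K : Type*) [Field K] (n : ℕ) := RingQuot (QnRel K n)

/-- The image `z_{A,i}` of a generator in `Qₙ` (junk value `0` if `i ∈ A`). -/
noncomputable def zQ (K : Type*) [Field K] (n : ℕ) (A : Finset (Fin n)) (i : Fin n) : Qn K n :=
  if h : i ∉ A then RingQuot.mkAlgHom K (QnRel K n) (FreeAlgebra.ι K (⟨(A, i), h⟩ : QIdx n))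
  else 0

/-- The element `u(A) = Σ_{D ⊆ A \ {i}} (−1)^{|A|−|D|} z_{D,i}` for the choice `i = min A`
(for nonempty `A`), with `u(∅) = 1`. -/
noncomputable def uQ (K : Type*) [Field K] (n : ℕ) (A : Finset (Fin n)) : Qn K n :=
  if h : A.Nonempty then
    ∑ D ∈ (A.erase (A.min' h)).powerset,
      (-1 : Qn K n) ^ (A.card - D.card) * zQ K n D (A.min' h)
  else 1

/-- The relations defining `Q(F)`: each `u(A)` with nonempty `A ∉ F` is set to `0`. -/
inductive QcRel (K : Type*) [Field K] (n : ℕ) (F : Set (Finset (Fin n))) :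
    Qn K n → Qn K n → Prop
  | rel (A : Finset (Fin n)) (hA : A.Nonempty) (hAF : A ∉ F) : QcRel K n F (uQ K n A) 0

/-- The algebra `Q(F)`: the quotient of `Qₙ` by the two-sided ideal generated by all
`u(A)` with nonempty `A ∉ F`. -/
abbrev Qc (K : Type*) [Field K] (n : ℕ) (F : Set (Finset (Fin n))) := RingQuot (QcRel K n F)

/-- The image of `u(A)` in `Q(F)`. -/
noncomputable def uc (K : Type*) [Field K] (n : ℕ) (F : Set (Finset (Fin n)))
    (A : Finset (Fin n)) : Qc K n F :=
  RingQuot.mkAlgHom K (QcRel K n F) (uQ K n A)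

lemma zQ_rel (K : Type*) [Field K] (n : ℕ) (D : Finset (Fin n)) (i j : Fin n)
    (hi : i ∉ D) (hj : j ∉ D) (hij : i ≠ j) :
    zQ K n (insert i D) j + zQ K n D i = zQ K n (insert j D) i + zQ K n D j := by
  have hj' : j ∉ insert i D := by simp [Finset.mem_insert, hij.symm, hj]
  have hi' : i ∉ insert j D := by simp [Finset.mem_insert, hij, hi]
  simp only [zQ, dif_pos hj', dif_pos hi, dif_pos hi', dif_pos hj]
  rw [← map_add, ← map_add]
  exact RingQuot.mkAlgHom_rel K (QnRel.add D i j hi hj hij)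

lemma half_step (K : Type*) [Field K] (n : ℕ) (A : Finset (Fin n))
    (i j : Fin n) (hi : i ∈ A) (hj : j ∈ A) (hij : i ≠ j) :
    ∑ D ∈ (A.erase i).powerset, (-1 : Qn K n) ^ (A.card - D.card) * zQ K n D i =
      ∑ D ∈ ((A.erase i).erase j).powerset,
        (-1 : Qn K n) ^ (A.card - D.card) * (zQ K n D i - zQ K n (insert j D) i) := by
  have hjmem : j ∈ A.erase i := Finset.mem_erase.2 ⟨hij.symm, hj⟩
  have hjnot : j ∉ (A.erase i).erase j := Finset.notMem_erase _ _
  conv_lhs => rw [← Finset.insert_erase hjmem]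
  rw [Finset.sum_powerset_insert hjnot, ← Finset.sum_add_distrib]
  refine Finset.sum_congr rfl fun D hD => ?_
  have hDsub : D ⊆ (A.erase i).erase j := Finset.mem_powerset.1 hD
  have hjD : j ∉ D := fun h => hjnot (hDsub h)
  have hcard : D.card + 1 ≤ A.card := by
    have h1 : D.card ≤ ((A.erase i).erase j).card := Finset.card_le_card hDsub
    have h2 : ((A.erase i).erase j).card + 1 = (A.erase i).card :=
      Finset.card_erase_add_one hjmem
    have h3 : (A.erase i).card + 1 = A.card := Finset.card_erase_add_one hi
    omega
  rw [Finset.card_insert_of_notMem hjD]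
  have hpow : A.card - D.card = (A.card - (D.card + 1)) + 1 := by omega
  have hs : (-1 : Qn K n) ^ (A.card - D.card) = -(-1 : Qn K n) ^ (A.card - (D.card + 1)) := by
    rw [hpow, pow_succ]
    exact mul_neg_one ((-1 : Qn K n) ^ (A.card - (D.card + 1)))
  have hz : ∀ z : Qn K n, (-(-1 : Qn K n) ^ (A.card - (D.card + 1))) * z
      = -((-1 : Qn K n) ^ (A.card - (D.card + 1)) * z) := fun z => neg_mul _ z
  rw [hs, mul_sub, hz, hz, sub_neg_eq_add]

/-- The right-hand side of formula (3) does not depend on the choice of `i ∈ A`: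
for nonempty `A` and `i, j ∈ A`,
`Σ_{D ⊆ A\{i}} (−1)^{|A|−|D|} z_{D,i} = Σ_{D ⊆ A\{j}} (−1)^{|A|−|D|} z_{D,j}` in `Qₙ`. -/
theorem independence_of_choice (K : Type*) [Field K] (n : ℕ)
    (A : Finset (Fin n)) (hA : A.Nonempty) (i j : Fin n) (hi : i ∈ A) (hj : j ∈ A) :
    ∑ D ∈ (A.erase i).powerset, (-1 : Qn K n) ^ (A.card - D.card) * zQ K n D i =
      ∑ D ∈ (A.erase j).powerset, (-1 : Qn K n) ^ (A.card - D.card) * zQ K n D j := by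
  rcases eq_or_ne i j with rfl | hij
  · rfl
  rw [half_step K n A i j hi hj hij, half_step K n A j i hj hi hij.symm]
  have hset : (A.erase j).erase i = (A.erase i).erase j := Finset.erase_right_comm
  rw [hset]
  refine Finset.sum_congr rfl fun D hD => ?_
  have hDsub : D ⊆ (A.erase i).erase j := Finset.mem_powerset.1 hD
  have hjD : j ∉ D := fun h => Finset.notMem_erase j (A.erase i) (hDsub h)
  have hiD : i ∉ D := fun h =>
    Finset.notMem_erase i A (Finset.mem_of_mem_erase (hDsub h))
  have h := zQ_rel K n D i j hiD hjD hij
  have hkey : zQ K n D i - zQ K n (insert j D) i = zQ K n D j - zQ K n (insert i D) j := by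
    calc zQ K n D i - zQ K n (insert j D) i
        = (zQ K n (insert i D) j + zQ K n D i)
          - (zQ K n (insert i D) j + zQ K n (insert j D) i) := by abel
      _ = (zQ K n (insert j D) i + zQ K n D j)
          - (zQ K n (insert i D) j + zQ K n (insert j D) i) := by rw [h]
      _ = zQ K n D j - zQ K n (insert i D) j := by abel
  rw [hkey]
end

section
/- Let L ⊆ Q_n be the k-linear span of all the generators z_{A,i} (A ⊆ I_n, i ∉ A). Then the elements u(A), for nonempty A ⊆ I_n, span L as a k-vector space. -/
section USpanHelpers

variable (K : Type*) [Field K] (n : ℕ)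

lemma qn_coeff_eq (m : ℕ) (x : Qn K n) :
    (-1 : Qn K n) ^ m * x = ((-1 : K) ^ m) • x := by
  rw [Algebra.smul_def]
  congr 1
  rw [map_pow, map_neg, map_one]

lemma smul_step {M : Type*} [AddCommGroup M] [Module K M] (s : K) (a b c d : M)
    (h : d + a = b + c) : (s * -1) • a + s • b = (s * -1) • c + s • d := by
  rw [mul_neg_one, neg_smul, neg_smul, neg_add_eq_sub, neg_add_eq_sub,
    sub_eq_sub_iff_add_eq_add, ← smul_add, ← smul_add, ← h]

lemma group_cancel {M : Type*} [AddCommGroup M] (S z : M) : z = S - (S + -z) := by abel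

/-- `u(A)` with an arbitrary choice of index `i`, with scalar coefficients. -/
noncomputable def uGen (A : Finset (Fin n)) (i : Fin n) : Qn K n :=
  ∑ D ∈ (A.erase i).powerset, ((-1 : K) ^ (A.card - D.card)) • zQ K n D i

lemma uQ_eq_uGen_min (A : Finset (Fin n)) (h : A.Nonempty) :
    uQ K n A = uGen K n A (A.min' h) := by
  rw [uQ, dif_pos h, uGen]
  exact Finset.sum_congr rfl fun D _ => qn_coeff_eq K n _ _

lemma z_rel (A : Finset (Fin n)) (i j : Fin n) (hi : i ∉ A) (hj : j ∉ A) (hij : i ≠ j) :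
    zQ K n (insert i A) j + zQ K n A i = zQ K n (insert j A) i + zQ K n A j := by
  have h := RingQuot.mkAlgHom_rel K (QnRel.add (K := K) A i j hi hj hij)
  rw [map_add, map_add] at h
  have hji : j ∉ insert i A := by simp [Finset.mem_insert, hij.symm, hj]
  have hij' : i ∉ insert j A := by simp [Finset.mem_insert, hij, hi]
  rw [zQ, zQ, zQ, zQ, dif_pos hji, dif_pos hij', dif_pos hi, dif_pos hj]
  exact h

lemma uGen_comm (A : Finset (Fin n)) (i j : Fin n) (hi : i ∈ A) (hj : j ∈ A) (hij : i ≠ j) :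
    uGen K n A i = uGen K n A j := by
  set B := (A.erase i).erase j with hB
  have hjB : j ∉ B := Finset.notMem_erase _ _
  have hiB : i ∉ B := fun h => Finset.notMem_erase i A (Finset.mem_erase.mp h).2
  have hAi : A.erase i = insert j B :=
    (Finset.insert_erase (Finset.mem_erase.mpr ⟨hij.symm, hj⟩)).symm
  have hAj : A.erase j = insert i B := by
    ext x
    simp only [hB, Finset.mem_insert, Finset.mem_erase]
    constructor
    · rintro ⟨hxj, hxA⟩
      rcases eq_or_ne x i with rfl | hxi
      · exact Or.inl rfl
      · exact Or.inr ⟨hxj, hxi, hxA⟩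
    · rintro (rfl | ⟨hxj, hxi, hxA⟩)
      · exact ⟨hij, hi⟩
      · exact ⟨hxj, hxA⟩
  have h2 : 2 ≤ A.card := Finset.one_lt_card.mpr ⟨i, hi, j, hj, hij⟩
  have hBcard : B.card = A.card - 2 := by
    rw [hB, Finset.card_erase_of_mem (Finset.mem_erase.mpr ⟨hij.symm, hj⟩),
      Finset.card_erase_of_mem hi]
    omega
  rw [uGen, uGen, hAi, hAj, Finset.sum_powerset_insert hjB, Finset.sum_powerset_insert hiB,
    ← Finset.sum_add_distrib, ← Finset.sum_add_distrib]
  apply Finset.sum_congr rfl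
  intro D hD
  have hDB : D ⊆ B := Finset.mem_powerset.mp hD
  have hiD : i ∉ D := fun h => hiB (hDB h)
  have hjD : j ∉ D := fun h => hjB (hDB h)
  have hDc : D.card ≤ A.card - 2 := hBcard ▸ Finset.card_le_card hDB
  obtain ⟨k, hk1, hk2⟩ : ∃ k, A.card - D.card = k + 1 ∧ A.card - (D.card + 1) = k :=
    ⟨A.card - D.card - 1, by omega, by omega⟩
  rw [Finset.card_insert_of_notMem hjD, Finset.card_insert_of_notMem hiD, hk1, hk2,
    pow_succ]
  exact smul_step K ((-1 : K) ^ k) _ _ _ _ (z_rel K n D i j hiD hjD hij)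

lemma uQ_eq_uGen (A : Finset (Fin n)) (h : A.Nonempty) (i : Fin n) (hi : i ∈ A) :
    uQ K n A = uGen K n A i := by
  rcases eq_or_ne (A.min' h) i with he | hne
  · rw [uQ_eq_uGen_min K n A h, he]
  · rw [uQ_eq_uGen_min K n A h, uGen_comm K n A (A.min' h) i (A.min'_mem h) hi hne]

lemma z_mem_span (A : Finset (Fin n)) :
    ∀ i ∉ A, zQ K n A i ∈
      Submodule.span K {x : Qn K n | ∃ B : Finset (Fin n), B.Nonempty ∧ x = uQ K n B} := by
  induction A using Finset.strongInduction with
  | _ A ih =>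
    intro i hiA
    have hins : (insert i A).Nonempty := Finset.insert_nonempty _ _
    have hu : uQ K n (insert i A)
        = ∑ D ∈ A.powerset, ((-1 : K) ^ (A.card + 1 - D.card)) • zQ K n D i := by
      rw [uQ_eq_uGen K n _ hins i (Finset.mem_insert_self i A), uGen,
        Finset.erase_insert hiA, Finset.card_insert_of_notMem hiA]
    have hsplit := Finset.sum_erase_add A.powerset
      (fun D => ((-1 : K) ^ (A.card + 1 - D.card)) • zQ K n D i)
      (Finset.mem_powerset_self A)
    have h1 : A.card + 1 - A.card = 1 := by omega
    have hz : zQ K n A i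
        = (∑ D ∈ A.powerset.erase A, ((-1 : K) ^ (A.card + 1 - D.card)) • zQ K n D i)
          - uQ K n (insert i A) := by
      have hfA : ((-1 : K) ^ (A.card + 1 - A.card)) • zQ K n A i = - zQ K n A i := by
        rw [h1, pow_one]
        exact neg_one_smul K (zQ K n A i)
      rw [hu, ← hsplit]
      simp only [hfA]
      exact group_cancel _ _
    rw [hz]
    apply sub_mem
    · apply Submodule.sum_mem
      intro D hD
      have hDA : D ⊆ A := Finset.mem_powerset.mp (Finset.mem_erase.mp hD).2
      have hDne : D ≠ A := (Finset.mem_erase.mp hD).1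
      exact Submodule.smul_mem _ _
        (ih D (Finset.ssubset_iff_subset_ne.mpr ⟨hDA, hDne⟩) i (fun h => hiA (hDA h)))
    · exact Submodule.subset_span ⟨insert i A, hins, rfl⟩

end USpanHelpers

/-- The elements `u(A)`, for nonempty `A ⊆ Iₙ`, span the `K`-linear span `L` of the
generators `z_{A,i}` in `Qₙ`. -/
theorem u_span (K : Type*) [Field K] (n : ℕ) :
    Submodule.span K {x : Qn K n | ∃ A : Finset (Fin n), A.Nonempty ∧ x = uQ K n A} =
      Submodule.span K
        {x : Qn K n | ∃ (A : Finset (Fin n)) (i : Fin n), i ∉ A ∧ x = zQ K n A i} := by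
  apply le_antisymm
  · rw [Submodule.span_le]
    rintro x ⟨A, hA, rfl⟩
    rw [uQ_eq_uGen_min K n A hA, uGen]
    apply Submodule.sum_mem
    intro D hD
    have hiD : A.min' hA ∉ D := fun h =>
      Finset.notMem_erase _ _ (Finset.mem_powerset.mp hD h)
    exact Submodule.smul_mem _ _ (Submodule.subset_span ⟨D, A.min' hA, hiD, rfl⟩)
  · rw [Submodule.span_le]
    rintro x ⟨A, i, hiA, rfl⟩
    exact z_mem_span K n A i hiA
end

section
/- Let L ⊆ Q_n be the k-linear span of all the generators z_{A,i} (A ⊆ I_n, i ∉ A). Then the family of elements u(A), indexed by the 2^n − 1 nonempty subsets A ⊆ I_n, is a basis of L as a k-vector space; in particular these elements are linearly independent and dim_k L = 2^n − 1. -/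
/-!
The additive relations say that `z_{D ∪ {j},i} - z_{D,i}` is symmetric in `i, j`, which makes
`u(A)` independent of the pivot `i ∈ A`. Möbius inversion on the Boolean lattice then gives
`z_{A,i} = -Σ_{E ⊆ A} u(E ∪ {i})`, so the `u(A)` span `L`. For independence, send `z_{A,i}` to
`g(A) - g(A ∪ {i})` in the square-zero extension `K ⊕ K^{P(Iₙ)}`, where `g(B)` is the indicator
of the subsets of `B`; this respects all relations and, by Möbius inversion again, sends `u(A)`
to the basis vector `e_A`.
-/

section MoebiusTransform

variable {α M : Type*} [AddCommGroup M]

def moebiusTransform (f : Finset α → M) (s : Finset α) : M :=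
  ∑ t ∈ s.powerset, (-1 : ℤ) ^ (s.card - t.card) • f t

lemma moebiusTransform_sub (f g : Finset α → M) (s : Finset α) :
    moebiusTransform (f - g) s = moebiusTransform f s - moebiusTransform g s := by
  simp only [moebiusTransform, Pi.sub_apply, smul_sub, Finset.sum_sub_distrib]

lemma moebiusTransform_neg (f : Finset α → M) (s : Finset α) :
    moebiusTransform (-f) s = -moebiusTransform f s := by
  simp only [moebiusTransform, Pi.neg_apply, smul_neg, Finset.sum_neg_distrib]

lemma map_moebiusTransform {N F : Type*} [AddCommGroup N] [FunLike F M N]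
    [AddMonoidHomClass F M N] (φ : F) (f : Finset α → M) (s : Finset α) :
    φ (moebiusTransform f s) = moebiusTransform (φ ∘ f) s := by
  simp only [moebiusTransform, map_sum, map_zsmul, Function.comp_apply]

lemma moebiusTransform_mem {S : Type*} [SetLike S M] [AddSubgroupClass S M] {p : S}
    {f : Finset α → M} {s : Finset α} (h : ∀ t ⊆ s, f t ∈ p) : moebiusTransform f s ∈ p :=
  sum_mem fun t ht => zsmul_mem (h t (Finset.mem_powerset.1 ht)) _

lemma moebiusTransform_congr {f g : Finset α → M} {s : Finset α}
    (h : ∀ t ⊆ s, f t = g t) : moebiusTransform f s = moebiusTransform g s :=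
  Finset.sum_congr rfl fun t ht => by rw [h t (Finset.mem_powerset.1 ht)]

variable [DecidableEq α]

lemma moebiusTransform_insert {a : α} {s : Finset α} (ha : a ∉ s) (f : Finset α → M) :
    moebiusTransform f (insert a s) = moebiusTransform (fun t => f (insert a t) - f t) s := by
  rw [moebiusTransform, Finset.sum_powerset_insert ha, add_comm, moebiusTransform,
    ← Finset.sum_add_distrib]
  refine Finset.sum_congr rfl fun t ht => ?_
  have hts : t.card ≤ s.card := Finset.card_le_card (Finset.mem_powerset.1 ht)
  have hat : a ∉ t := fun h => ha (Finset.mem_powerset.1 ht h)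
  rw [Finset.card_insert_of_notMem ha, Finset.card_insert_of_notMem hat,
    Nat.add_sub_add_right, Nat.succ_sub hts, pow_succ, mul_neg_one, neg_smul, smul_sub,
    sub_eq_add_neg]

lemma sum_powerset_moebiusTransform (f : Finset α → M) (s : Finset α) :
    ∑ t ∈ s.powerset, moebiusTransform f t = f s := by
  induction s using Finset.induction_on generalizing f with
  | empty => simp [moebiusTransform]
  | @insert a s ha ih =>
    have hinsert : ∀ t ∈ s.powerset, moebiusTransform f (insert a t)
        = moebiusTransform (fun t => f (insert a t)) t - moebiusTransform f t := fun t ht =>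
      (moebiusTransform_insert (fun h => ha (Finset.mem_powerset.1 ht h)) f).trans
        (moebiusTransform_sub _ f t)
    rw [Finset.sum_powerset_insert ha, Finset.sum_congr rfl hinsert, Finset.sum_sub_distrib,
      ih, ih, add_sub_cancel]

lemma moebiusTransform_sum_powerset (f : Finset α → M) (s : Finset α) :
    moebiusTransform (fun t => ∑ u ∈ t.powerset, f u) s = f s := by
  induction s using Finset.induction_on generalizing f with
  | empty => simp [moebiusTransform]
  | @insert a s ha ih =>
    rw [moebiusTransform_insert ha, ← ih (fun u => f (insert a u))]
    refine moebiusTransform_congr fun t hts => ?_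
    rw [Finset.sum_powerset_insert fun h => ha (hts h), add_sub_cancel_left]

end MoebiusTransform

section Qn

variable {K : Type*} [Field K] {n : ℕ}

lemma zQ_insert_sub_zQ_comm {D : Finset (Fin n)} {i j : Fin n} (hi : i ∉ D) (hj : j ∉ D)
    (hij : i ≠ j) :
    zQ K n (insert j D) i - zQ K n D i = zQ K n (insert i D) j - zQ K n D j := by
  have hi' : i ∉ insert j D := by simp [hij, hi]
  have hj' : j ∉ insert i D := by simp [hij.symm, hj]
  rw [sub_eq_sub_iff_add_eq_add, zQ, zQ, zQ, zQ, dif_pos hi, dif_pos hj, dif_pos hi',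
    dif_pos hj', ← map_add, ← map_add]
  exact (RingQuot.mkAlgHom_rel K (QnRel.add D i j hi hj hij)).symm

lemma moebiusTransform_zQ_insert_comm {E : Finset (Fin n)} {i j : Fin n} (hi : i ∉ E)
    (hj : j ∉ E) (hij : i ≠ j) :
    moebiusTransform (zQ K n · i) (insert j E) = moebiusTransform (zQ K n · j) (insert i E) := by
  rw [moebiusTransform_insert hj, moebiusTransform_insert hi]
  exact moebiusTransform_congr fun D hD =>
    zQ_insert_sub_zQ_comm (fun h => hi (hD h)) (fun h => hj (hD h)) hij

lemma uQ_eq_neg_moebiusTransform {A : Finset (Fin n)} {i : Fin n} (hi : i ∈ A) :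
    uQ K n A = -moebiusTransform (zQ K n · i) (A.erase i) := by
  have hA : A.Nonempty := ⟨i, hi⟩
  set m := A.min' hA
  have hm : m ∈ A := A.min'_mem hA
  have hpivot : moebiusTransform (zQ K n · m) (A.erase m)
      = moebiusTransform (zQ K n · i) (A.erase i) := by
    rcases eq_or_ne i m with rfl | him
    · rfl
    have hE : A.erase m = insert i ((A.erase m).erase i) :=
      (Finset.insert_erase (Finset.mem_erase.2 ⟨him, hi⟩)).symm
    have hE' : A.erase i = insert m ((A.erase m).erase i) := by
      rw [Finset.erase_right_comm]
      exact (Finset.insert_erase (Finset.mem_erase.2 ⟨him.symm, hm⟩)).symm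
    rw [hE, hE']
    exact moebiusTransform_zQ_insert_comm (by simp) (by simp) him.symm
  rw [← hpivot, uQ, dif_pos hA, moebiusTransform, ← Finset.sum_neg_distrib]
  refine Finset.sum_congr rfl fun D hD => ?_
  have hD : D.card ≤ (A.erase m).card := Finset.card_le_card (Finset.mem_powerset.1 hD)
  rw [Finset.card_erase_of_mem hm] at hD
  have hsign : (-1 : ℤ) ^ (A.card - D.card) = -(-1) ^ (A.card - 1 - D.card) := by
    have := Finset.card_pos.2 hA
    rw [show A.card - D.card = (A.card - 1 - D.card) + 1 by omega, pow_succ, mul_neg_one]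
  rw [Finset.card_erase_of_mem hm, ← neg_smul, ← hsign, zsmul_eq_mul]
  push_cast
  -- `uQ` is written with the `Neg` instance of `RingQuot`, `push_cast` produces the ring one
  rfl

lemma zQ_eq_neg_sum_uQ {A : Finset (Fin n)} {i : Fin n} (hi : i ∉ A) :
    zQ K n A i = -∑ E ∈ A.powerset, uQ K n (insert i E) := by
  have hu : ∀ E ∈ A.powerset, uQ K n (insert i E) = -moebiusTransform (zQ K n · i) E :=
    fun E hE => by
      rw [uQ_eq_neg_moebiusTransform (Finset.mem_insert_self i E),
        Finset.erase_insert fun h => hi (Finset.mem_powerset.1 hE h)]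
  rw [Finset.sum_congr rfl hu, Finset.sum_neg_distrib, neg_neg, sum_powerset_moebiusTransform]

lemma span_range_uQ :
    Submodule.span K (Set.range fun A : {A : Finset (Fin n) // A.Nonempty} => uQ K n A.1) =
      Submodule.span K {x | ∃ (A : Finset (Fin n)) (i : Fin n), i ∉ A ∧ x = zQ K n A i} := by
  apply le_antisymm <;> rw [Submodule.span_le]
  · rintro _ ⟨⟨A, i, hi⟩, rfl⟩
    change uQ K n A ∈ _
    rw [uQ_eq_neg_moebiusTransform hi]
    refine neg_mem (moebiusTransform_mem fun D hD => Submodule.subset_span ?_)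
    exact ⟨D, i, fun h => Finset.notMem_erase i A (hD h), rfl⟩
  · rintro _ ⟨A, i, hi, rfl⟩
    rw [SetLike.mem_coe, zQ_eq_neg_sum_uQ hi]
    exact neg_mem (sum_mem fun E _ => Submodule.subset_span ⟨⟨insert i E, by simp⟩, rfl⟩)

end Qn

section Coordinates

variable (K : Type*) [Field K] (n : ℕ)

def powersetIndicator (B : Finset (Fin n)) : Finset (Fin n) → K :=
  ∑ C ∈ B.powerset, Pi.single C 1

/-- Well defined because `inr x * inr y = 0` in a square-zero extension, and because the
additive relations hold for any assignment `z_{A,i} ↦ g(A) - g(A ∪ {i})`. -/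
noncomputable def uCoordAlgHom : Qn K n →ₐ[K] TrivSqZeroExt K (Finset (Fin n) → K) :=
  RingQuot.liftAlgHom K ⟨FreeAlgebra.lift K fun p : QIdx n =>
      TrivSqZeroExt.inr (powersetIndicator K n p.1.1 - powersetIndicator K n (insert p.1.2 p.1.1)),
    fun x y h => by
      induction h with
      | add A i j =>
        simp only [map_add, FreeAlgebra.lift_ι_apply, ← TrivSqZeroExt.inr_add, Finset.insert_comm]
        abel_nf
      | mul => simp only [map_mul, FreeAlgebra.lift_ι_apply, TrivSqZeroExt.inr_mul_inr]⟩

noncomputable def uCoord : Qn K n →ₗ[K] Finset (Fin n) → K :=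
  TrivSqZeroExt.sndHom K _ ∘ₗ (uCoordAlgHom K n).toLinearMap

variable {K n}

lemma uCoord_zQ {A : Finset (Fin n)} {i : Fin n} (hi : i ∉ A) :
    uCoord K n (zQ K n A i) = powersetIndicator K n A - powersetIndicator K n (insert i A) := by
  simp [uCoord, uCoordAlgHom, zQ, hi]

lemma uCoord_uQ {A : Finset (Fin n)} (hA : A.Nonempty) :
    uCoord K n (uQ K n A) = Pi.single A 1 := by
  obtain ⟨i, hi⟩ := hA
  have hcoord : ∀ D ⊆ A.erase i, -uCoord K n (zQ K n D i) =
      powersetIndicator K n (insert i D) - powersetIndicator K n D := fun D hD => by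
    rw [uCoord_zQ fun h => Finset.notMem_erase i A (hD h), neg_sub]
  calc uCoord K n (uQ K n A)
      = -moebiusTransform (fun D => uCoord K n (zQ K n D i)) (A.erase i) := by
        rw [uQ_eq_neg_moebiusTransform hi, map_neg, map_moebiusTransform]; rfl
    _ = moebiusTransform
          (fun D => powersetIndicator K n (insert i D) - powersetIndicator K n D) (A.erase i) := by
        rw [← moebiusTransform_neg]; exact moebiusTransform_congr hcoord
    _ = moebiusTransform (powersetIndicator K n) A := by
        rw [← moebiusTransform_insert (Finset.notMem_erase i A), Finset.insert_erase hi]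
    _ = Pi.single A 1 := moebiusTransform_sum_powerset _ A

end Coordinates

lemma uQ_linearIndependent (K : Type*) [Field K] (n : ℕ) :
    LinearIndependent K fun A : {A : Finset (Fin n) // A.Nonempty} => uQ K n A.1 := by
  apply LinearIndependent.of_comp (uCoord K n)
  have hcoord : uCoord K n ∘ (fun A : {A : Finset (Fin n) // A.Nonempty} => uQ K n A.1) =
      (fun B => Pi.single B 1) ∘ Subtype.val := funext fun A => uCoord_uQ A.2
  rw [hcoord]
  exact (Pi.linearIndependent_single_one _ K).comp _ Subtype.val_injective

/-- The family `u(A)`, indexed by the `2ⁿ − 1` nonempty subsets `A ⊆ Iₙ`, is a basis of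
the linear span `L` of the generators `z_{A,i}`; in particular the `u(A)` are linearly
independent and `dim_K L = 2ⁿ − 1`. -/
theorem u_basis (K : Type*) [Field K] (n : ℕ) :
    (LinearIndependent K fun A : {A : Finset (Fin n) // A.Nonempty} => uQ K n A.1) ∧
    (∃ b : Module.Basis {A : Finset (Fin n) // A.Nonempty} K
        (Submodule.span K
          {x : Qn K n | ∃ (A : Finset (Fin n)) (i : Fin n), i ∉ A ∧ x = zQ K n A i}),
      ∀ A : {A : Finset (Fin n) // A.Nonempty}, (b A : Qn K n) = uQ K n A.1) ∧
    Module.finrank K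
      (Submodule.span K
        {x : Qn K n | ∃ (A : Finset (Fin n)) (i : Fin n), i ∉ A ∧ x = zQ K n A i}) =
      2 ^ n - 1 := by
  have hli := uQ_linearIndependent K n
  let b := (Module.Basis.span hli).map (LinearEquiv.ofEq _ _ span_range_uQ)
  have hb : ∀ A, (b A : Qn K n) = uQ K n A.1 := fun A => by
    simp [b, Module.Basis.span_apply]
  refine ⟨hli, ⟨b, hb⟩, ?_⟩
  rw [Module.finrank_eq_card_basis b]
  simp [Fintype.card_subtype, Finset.nonempty_iff_ne_empty, Finset.filter_ne']
end

section
/- Let F be a graph with n nodes. Then for every pair of distinct elements i, j ∈ I_n, the identity [u(i), u(j)] = u(ij)·(u(i) − u(j)) holds in Q(F), where [x,y] = xy − yx. -/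
section Aux
variable (K : Type*) [Field K] (n : ℕ)

lemma zQ_def (A : Finset (Fin n)) (i : Fin n) (h : i ∉ A) :
    zQ K n A i = RingQuot.mkAlgHom K (QnRel K n) (FreeAlgebra.ι K (⟨(A, i), h⟩ : QIdx n)) := by
  rw [zQ, dif_pos h]

lemma z_add (i j : Fin n) (hij : i ≠ j) :
    zQ K n {i} j + zQ K n ∅ i = zQ K n {j} i + zQ K n ∅ j := by
  have h := RingQuot.mkAlgHom_rel K
    (QnRel.add (K := K) (∅ : Finset (Fin n)) i j (by simp) (by simp) hij)
  simp only [map_add] at h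
  rw [zQ_def K n {i} j (by simp [hij.symm]), zQ_def K n ∅ i (by simp),
      zQ_def K n {j} i (by simp [hij]), zQ_def K n ∅ j (by simp)]
  convert h using 4 <;> simp

lemma z_mul (i j : Fin n) (hij : i ≠ j) :
    zQ K n {i} j * zQ K n ∅ i = zQ K n {j} i * zQ K n ∅ j := by
  have h := RingQuot.mkAlgHom_rel K
    (QnRel.mul (K := K) (∅ : Finset (Fin n)) i j (by simp) (by simp) hij)
  simp only [map_mul] at h
  rw [zQ_def K n {i} j (by simp [hij.symm]), zQ_def K n ∅ i (by simp),
      zQ_def K n {j} i (by simp [hij]), zQ_def K n ∅ j (by simp)]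
  convert h using 4 <;> simp

lemma uQ_singleton (i : Fin n) : uQ K n {i} = - zQ K n ∅ i := by
  rw [uQ, dif_pos (Finset.singleton_nonempty i)]
  simp [Finset.min'_singleton, Finset.erase_singleton]
  exact neg_one_mul (zQ K n ∅ i)

lemma uQ_pair_lt (i j : Fin n) (h : i < j) :
    uQ K n {i, j} = zQ K n ∅ i - zQ K n {j} i := by
  have hne : ({i, j} : Finset (Fin n)).Nonempty := ⟨i, by simp⟩
  have hmin : ({i, j} : Finset (Fin n)).min' hne = i := by
    apply le_antisymm
    · exact Finset.min'_le _ _ (by simp)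
    · apply Finset.le_min'
      intro y hy
      rcases Finset.mem_insert.mp hy with rfl | hy
      · exact le_rfl
      · rw [Finset.mem_singleton] at hy
        subst hy
        exact h.le
  rw [uQ, dif_pos hne]
  simp only [hmin]
  have herase : ({i, j} : Finset (Fin n)).erase i = {j} :=
    Finset.erase_insert (by simp [h.ne])
  have hp : ({j} : Finset (Fin n)).powerset = {∅, {j}} := by
    ext D
    simp [Finset.mem_powerset, Finset.subset_singleton_iff]
  rw [herase, hp,
      Finset.sum_insert (by simp [(Finset.singleton_ne_empty j).symm]),
      Finset.sum_singleton, Finset.card_pair h.ne]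
  norm_num
  noncomm_ring
  rw [smul_mul_assoc, one_mul]

lemma uQ_pair (i j : Fin n) (hij : i ≠ j) :
    uQ K n {i, j} = zQ K n ∅ i - zQ K n {j} i := by
  rcases lt_or_gt_of_ne hij with h | h
  · exact uQ_pair_lt K n i j h
  · rw [Finset.pair_comm, uQ_pair_lt K n j i h,
        sub_eq_sub_iff_add_eq_add, add_comm (zQ K n ∅ j) _, add_comm (zQ K n ∅ i) _]
    exact (z_add K n i j hij).symm

lemma ring_lemma {R : Type*} [Ring R] (a b c d : R)
    (hadd : d + a = c + b) (hmul : d * a = c * b) :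
    (-a) * (-b) - (-b) * (-a) = (a - c) * (-a - -b) := by
  have hd : d = c + b - a := eq_sub_of_add_eq hadd
  have key : c * b = c * a + b * a - a * a := by
    rw [← hmul, hd]; noncomm_ring
  have expand : (a - c) * (-a - -b) = a * b - a * a - c * b + c * a := by
    noncomm_ring
  rw [expand, key]
  noncomm_ring

lemma main_Qn (i j : Fin n) (hij : i ≠ j) :
    uQ K n {i} * uQ K n {j} - uQ K n {j} * uQ K n {i}
      = uQ K n {i, j} * (uQ K n {i} - uQ K n {j}) := by
  rw [uQ_singleton, uQ_singleton, uQ_pair K n i j hij]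
  exact ring_lemma _ _ _ _ (z_add K n i j hij) (z_mul K n i j hij)

end Aux

/-- For a graph `F` and distinct `i, j`, `[u(i), u(j)] = u(ij)·(u(i) − u(j))` in `Q(F)`. -/
theorem graph_relation_i (K : Type*) [Field K] (n : ℕ)
    (F : Set (Finset (Fin n)))
    (hFne : ∀ A ∈ F, A.Nonempty)
    (hFsing : ∀ i : Fin n, ({i} : Finset (Fin n)) ∈ F)
    (hFdown : ∀ A ∈ F, ∀ B ⊆ A, B.Nonempty → B ∈ F)
    (hFgr : ∀ A ∈ F, A.card ≤ 2)
    (i j : Fin n) (hij : i ≠ j) :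
    uc K n F {i} * uc K n F {j} - uc K n F {j} * uc K n F {i} =
      uc K n F {i, j} * (uc K n F {i} - uc K n F {j}) := by
  have main := main_Qn K n i j hij
  simp only [uc]
  rw [← map_mul, ← map_mul,
      ← map_sub (RingQuot.mkAlgHom K (QcRel K n F)),
      ← map_sub (RingQuot.mkAlgHom K (QcRel K n F)),
      ← map_mul, main]
end

section
/- Let F be a graph with n nodes. Then the k-algebra Q(F) is generated by the elements u(i), i ∈ I_n, together with the elements u(ij), {i,j} ∈ E(F); that is, the smallest unital k-subalgebra of Q(F) containing these elements is Q(F) itself. -/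
/-!
The additive relations of `Qₙ` make the alternating sum defining `u(A)` independent of the base
point `i ∈ A`. Taking `i` as base point for `A ∪ {i}` (with `i ∉ A`) gives
`z_{A,i} = -u(A ∪ {i}) + Σ_{D ⊊ A} ± z_{D,i}`, so by induction on `A` every generator `z_{A,i}`
of `Q(F)` lies in the subalgebra generated by the `u(B)` with `B ∈ F`, the other `u(B)` being
zero in `Q(F)`. For a graph these are exactly the `u(i)` and the `u(ij)` with `{i,j} ∈ E(F)`.
-/

lemma neg_one_pow_sub_one {R : Type*} [Monoid R] [HasDistribNeg R] {m : ℕ} (hm : m ≠ 0) :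
    (-1 : R) ^ (m - 1) = -(-1) ^ m := by
  obtain ⟨k, rfl⟩ := Nat.exists_eq_succ_of_ne_zero hm
  simp [pow_succ]

section Qn

variable (K : Type*) [Field K] {n : ℕ}

/-- `u(A)` computed with the base point `i` in place of `min A`. -/
noncomputable def uQAt (A : Finset (Fin n)) (i : Fin n) : Qn K n :=
  ∑ D ∈ (A.erase i).powerset, (-1 : Qn K n) ^ (A.card - D.card) * zQ K n D i

variable {K}

lemma zQ_sub_zQ_insert_comm {E : Finset (Fin n)} {i j : Fin n} (hi : i ∉ E) (hj : j ∉ E)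
    (hij : i ≠ j) :
    zQ K n E i - zQ K n (insert j E) i = zQ K n E j - zQ K n (insert i E) j := by
  have h := RingQuot.mkAlgHom_rel K (s := QnRel K n) (QnRel.add E i j hi hj hij)
  rw [map_add, map_add] at h
  rw [zQ, zQ, zQ, zQ, dif_pos hi, dif_pos hj, dif_pos (by simp [hij, hi]),
    dif_pos (by simp [hij.symm, hj]), sub_eq_sub_iff_add_eq_add, add_comm, h, add_comm]

lemma uQAt_eq_sum_sub {A : Finset (Fin n)} {i j : Fin n} (hjA : j ∈ A) (hij : i ≠ j) :
    uQAt K A i = ∑ E ∈ ((A.erase i).erase j).powerset,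
      (-1 : Qn K n) ^ (A.card - E.card) * (zQ K n E i - zQ K n (insert j E) i) := by
  have hj : j ∈ A.erase i := Finset.mem_erase.mpr ⟨hij.symm, hjA⟩
  conv_lhs => rw [uQAt, ← Finset.insert_erase hj]
  rw [Finset.sum_powerset_insert (Finset.notMem_erase j _),
    ← Finset.sum_add_distrib]
  refine Finset.sum_congr rfl fun E hE => ?_
  have hjE : j ∉ E := fun h => Finset.notMem_erase j _ (Finset.mem_powerset.mp hE h)
  have hlt : E.card < A.card := by
    have := Finset.card_le_card ((Finset.insert_subset_insert j (Finset.mem_powerset.mp hE)).trans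
      ((Finset.insert_erase hj).le.trans (Finset.erase_subset i A)))
    rw [Finset.card_insert_of_notMem hjE] at this
    omega
  rw [Finset.card_insert_of_notMem hjE, ← Nat.sub_sub,
    neg_one_pow_sub_one (R := Qn K n) (Nat.sub_ne_zero_of_lt hlt), mul_sub, neg_mul, sub_eq_add_neg]

lemma uQAt_eq_of_mem {A : Finset (Fin n)} {i j : Fin n} (hiA : i ∈ A) (hjA : j ∈ A) :
    uQAt K A i = uQAt K A j := by
  rcases eq_or_ne i j with rfl | hij
  · rfl
  rw [uQAt_eq_sum_sub hjA hij, uQAt_eq_sum_sub hiA hij.symm, Finset.erase_right_comm]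
  refine Finset.sum_congr rfl fun E hE => ?_
  have hE := Finset.mem_powerset.mp hE
  have hiE : i ∉ E := fun h => Finset.notMem_erase i _ (hE h)
  have hjE : j ∉ E := fun h => Finset.notMem_erase j A (Finset.erase_subset i _ (hE h))
  rw [zQ_sub_zQ_insert_comm hiE hjE hij]

lemma uQ_eq_uQAt {A : Finset (Fin n)} {i : Fin n} (hi : i ∈ A) : uQ K n A = uQAt K A i := by
  rw [uQ, dif_pos ⟨i, hi⟩]
  exact uQAt_eq_of_mem (A.min'_mem _) hi

lemma zQ_eq_neg_uQAt_insert_add_sum {A : Finset (Fin n)} {i : Fin n} (hi : i ∉ A) :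
    zQ K n A i = -uQAt K (insert i A) i +
      ∑ D ∈ A.ssubsets, (-1 : Qn K n) ^ (A.card + 1 - D.card) * zQ K n D i := by
  rw [uQAt, Finset.erase_insert hi, Finset.card_insert_of_notMem hi,
    ← Finset.add_sum_erase _ _ (Finset.mem_powerset_self A), Nat.add_sub_cancel_left, pow_one,
    Finset.ssubsets, neg_one_mul (α := Qn K n), neg_add, neg_neg, neg_add_cancel_right]

end Qn

section Qc

variable {K : Type*} [Field K] {n : ℕ} {F : Set (Finset (Fin n))}

lemma uc_eq_zero {A : Finset (Fin n)} (hA : A.Nonempty) (hAF : A ∉ F) : uc K n F A = 0 := by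
  rw [uc, RingQuot.mkAlgHom_rel K (QcRel.rel A hA hAF), map_zero]

lemma mkAlgHom_uQAt {A : Finset (Fin n)} {i : Fin n} (hi : i ∈ A) :
    RingQuot.mkAlgHom K (QcRel K n F) (uQAt K A i) = uc K n F A := by
  rw [uc, uQ_eq_uQAt hi]

lemma subalgebra_eq_top_of_zQ_mem {S : Subalgebra K (Qc K n F)}
    (hS : ∀ A i, i ∉ A → RingQuot.mkAlgHom K (QcRel K n F) (zQ K n A i) ∈ S) : S = ⊤ := by
  set f := (RingQuot.mkAlgHom K (QcRel K n F)).comp (RingQuot.mkAlgHom K (QnRel K n))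
  have hf : Function.Surjective f :=
    (RingQuot.mkAlgHom_surjective K _).comp (RingQuot.mkAlgHom_surjective K _)
  rw [eq_top_iff, ← f.range_eq_top.mpr hf, ← Algebra.map_top, ← FreeAlgebra.adjoin_range_ι,
    AlgHom.map_adjoin, Algebra.adjoin_le_iff]
  rintro _ ⟨_, ⟨⟨⟨A, i⟩, hi⟩, rfl⟩, rfl⟩
  simpa [f, zQ, hi] using hS A i hi

lemma mkAlgHom_zQ_mem_of_uc_mem {S : Subalgebra K (Qc K n F)}
    (hS : ∀ A : Finset (Fin n), A.Nonempty → uc K n F A ∈ S) {A : Finset (Fin n)} {i : Fin n}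
    (hi : i ∉ A) : RingQuot.mkAlgHom K (QcRel K n F) (zQ K n A i) ∈ S := by
  -- `neg_mem` cannot unify the `Semifield` and `CommRing` instance paths on `K` by itself.
  have hneg (x) (hx : x ∈ S) : -x ∈ S := Subalgebra.neg_mem (R := K) (A := Qc K n F) S hx
  induction A using Finset.strongInduction with
  | H A ih =>
    rw [zQ_eq_neg_uQAt_insert_add_sum hi, map_add, map_neg, map_sum,
      mkAlgHom_uQAt (Finset.mem_insert_self i A)]
    refine add_mem (hneg _ (hS _ (Finset.insert_nonempty i A))) (sum_mem fun D hD => ?_)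
    have hDA := Finset.mem_ssubsets.mp hD
    rw [map_mul, map_pow, map_neg, map_one]
    exact mul_mem (pow_mem (hneg 1 S.one_mem) _) (ih D hDA fun h => hi (hDA.subset h))

lemma subalgebra_eq_top_of_uc_mem {S : Subalgebra K (Qc K n F)}
    (hS : ∀ A ∈ F, A.Nonempty → uc K n F A ∈ S) : S = ⊤ := by
  refine subalgebra_eq_top_of_zQ_mem fun _ _ => mkAlgHom_zQ_mem_of_uc_mem fun A hA => ?_
  by_cases hAF : A ∈ F
  · exact hS A hAF hA
  · rw [uc_eq_zero hA hAF]
    exact zero_mem S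

end Qc

theorem graph_generators_general (K : Type*) [Field K] (n : ℕ)
    (F : Set (Finset (Fin n)))
    (hFgr : ∀ A ∈ F, A.card ≤ 2)
 :
    Algebra.adjoin K
        ((Set.range fun i : Fin n => uc K n F {i}) ∪
          {x : Qc K n F | ∃ i j : Fin n, i ≠ j ∧ ({i, j} : Finset (Fin n)) ∈ F ∧
            x = uc K n F {i, j}}) = ⊤ := by
  refine subalgebra_eq_top_of_uc_mem fun A hAF hA => Algebra.subset_adjoin ?_
  have hle := hFgr A hAF
  have hpos := hA.card_pos
  obtain hcard | hcard : A.card = 1 ∨ A.card = 2 := by omega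
  · obtain ⟨i, rfl⟩ := Finset.card_eq_one.mp hcard
    exact Or.inl ⟨i, rfl⟩
  · obtain ⟨i, j, hij, rfl⟩ := Finset.card_eq_two.mp hcard
    exact Or.inr ⟨i, j, hij, hAF, rfl⟩

/-- For a graph `F`, the algebra `Q(F)` is generated as a unital `K`-algebra by the
elements `u(i)`, `i ∈ Iₙ`, together with the elements `u(ij)` for the edges
`{i,j} ∈ E(F)`. -/
theorem graph_generators (K : Type*) [Field K] (n : ℕ)
    (F : Set (Finset (Fin n)))
    (hFne : ∀ A ∈ F, A.Nonempty)
    (hFsing : ∀ i : Fin n, ({i} : Finset (Fin n)) ∈ F)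
    (hFdown : ∀ A ∈ F, ∀ B ⊆ A, B.Nonempty → B ∈ F)
    (hFgr : ∀ A ∈ F, A.card ≤ 2)
 :
    Algebra.adjoin K
        ((Set.range fun i : Fin n => uc K n F {i}) ∪
          {x : Qc K n F | ∃ i j : Fin n, i ≠ j ∧ ({i, j} : Finset (Fin n)) ∈ F ∧
            x = uc K n F {i, j}}) = ⊤ :=
  graph_generators_general K n F hFgr
end

section
/- Let n₁ ≤ n₂ be natural numbers, let F be a complex with n₁ nodes, and let F' be the same family of subsets regarded as a complex with n₂ nodes via the inclusion I_{n₁} ⊆ I_{n₂}. Then there is an isomorphism of k-algebras Q(F) ≅ Q(F') (where Q(F) is formed inside Q_{n₁} and Q(F') inside Q_{n₂}) sending the image of u(A) in Q(F) to the image of u(A) in Q(F') for each A ∈ F. -/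
/-!
An embedding `f` of the nodes induces `Q_m → Q_n`, `z_{A,i} ↦ z_{f A, f i}`. Since the additive
relations make `u(A)` computable at any node of `A`, this sends `u(A)` to `u(f A)` and descends to
`Q(F) → Q(f F)`. The inverse sends `z_{B,j}` to `z_{f⁻¹ B, f⁻¹ j}`, or to `0` when `j` is not in
the image of `f`. It kills `u(B)` for `B ∉ f F`: inside the image of `f` this is a relation of
`Q(F)`, and otherwise `u(B)` can be computed at a node outside the image, where every term
vanishes. The two maps are mutually inverse because Möbius inversion gives
`z_{B,j} = -Σ_{D ⊆ B} u(D ∪ {j})`, so in `Q(f F)` the generator `z_{B,j}` vanishes when `j` is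
outside the image of `f` and otherwise depends only on the part of `B` inside it.
-/

open Finset RingQuot

theorem neg_one_pow_sub_succ {R : Type*} [Ring R] {N k : ℕ} (h : k < N) :
    (-1 : R) ^ (N - (k + 1)) = -(-1) ^ (N - k) := by
  rw [show N - k = N - (k + 1) + 1 by omega, pow_succ, mul_neg_one, neg_neg]

namespace Finset

variable {α β : Type*}

theorem powerset_map (f : α ↪ β) (s : Finset α) :
    (s.map f).powerset = s.powerset.map (mapEmbedding f).toEmbedding := by
  ext D
  simp only [mem_powerset, mem_map, subset_map_iff, RelEmbedding.coe_toEmbedding,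
    mapEmbedding_apply]
  constructor <;> rintro ⟨u, hu, rfl⟩ <;> exact ⟨u, hu, rfl⟩

theorem sum_powerset_sum_powerset_neg_one_pow {R : Type*} [DecidableEq α] [Ring R]
    (g : Finset α → R) (A : Finset α) :
    ∑ D ∈ A.powerset, ∑ E ∈ D.powerset, (-1 : R) ^ (#D - #E) * g E = g A := by
  induction A using Finset.induction_on generalizing g with
  | empty => simp
  | insert a s ha ih =>
    have hsplit : ∀ D ∈ s.powerset,
        ∑ E ∈ (insert a D).powerset, (-1 : R) ^ (#(insert a D) - #E) * g E
          = -∑ E ∈ D.powerset, (-1 : R) ^ (#D - #E) * g E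
            + ∑ E ∈ D.powerset, (-1 : R) ^ (#D - #E) * g (insert a E) := by
      intro D hD
      have haD : a ∉ D := fun h => ha (mem_powerset.1 hD h)
      rw [sum_powerset_insert haD, ← sum_neg_distrib]
      congr 1 <;> refine sum_congr rfl fun E hE => ?_
      · have hED := card_le_card (mem_powerset.1 hE)
        rw [card_insert_of_notMem haD, Nat.sub_add_comm hED, pow_succ', neg_one_mul, neg_mul]
      · have haE : a ∉ E := fun h => haD (mem_powerset.1 hE h)
        rw [card_insert_of_notMem haD, card_insert_of_notMem haE, Nat.add_sub_add_right]
    rw [sum_powerset_insert ha, sum_congr rfl hsplit, sum_add_distrib, sum_neg_distrib, ih, ih,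
      add_neg_cancel_left]

theorem preimage_insert_apply [DecidableEq α] [DecidableEq β] (f : α ↪ β) (s : Finset β)
    (a : α) :
    (insert (f a) s).preimage f f.injective.injOn = insert a (s.preimage f f.injective.injOn) := by
  ext x
  simp

theorem preimage_insert_of_notMem_range [DecidableEq β] (f : α ↪ β) (s : Finset β) {b : β}
    (hb : b ∉ Set.range f) :
    (insert b s).preimage f f.injective.injOn = s.preimage f f.injective.injOn := by
  ext x
  simp only [mem_preimage, mem_insert, or_iff_right_iff_imp]
  exact fun h => absurd ⟨x, h⟩ hb

theorem map_preimage_of_subset_range (f : α ↪ β) {s : Finset β} (hs : ↑s ⊆ Set.range f) :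
    (s.preimage f f.injective.injOn).map f = s := by
  classical
  rw [map_eq_image, image_preimage, filter_true_of_mem fun x hx => hs hx]

end Finset

namespace Qn

/-- The instance found by search multiplies through `FreeAlgebra.instSemiring` rather than through
the ring structure of `Qn K n`, which blocks rewriting with `neg_mul` and `neg_one_mul`. -/
instance instHasDistribNeg (K : Type*) [Field K] (n : ℕ) : HasDistribNeg (Qn K n) :=
  NonUnitalNonAssocRing.toHasDistribNeg

variable {K : Type*} [Field K] {m n : ℕ}

theorem zQ_of_notMem {A : Finset (Fin n)} {i : Fin n} (hi : i ∉ A) :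
    zQ K n A i = mkAlgHom K (QnRel K n) (FreeAlgebra.ι K ⟨(A, i), hi⟩) :=
  dif_pos hi

theorem zQ_of_mem {A : Finset (Fin n)} {i : Fin n} (hi : i ∈ A) : zQ K n A i = 0 :=
  dif_neg (not_not.2 hi)

theorem algHom_ext {B : Type*} [Semiring B] [Algebra K B] {φ ψ : Qn K n →ₐ[K] B}
    (h : ∀ A i, i ∉ A → φ (zQ K n A i) = ψ (zQ K n A i)) : φ = ψ :=
  ringQuot_ext' K _ _ <| FreeAlgebra.hom_ext <| funext fun ⟨(A, i), hi⟩ => by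
    simpa [zQ_of_notMem hi] using h A i hi

theorem zQ_insert_add_zQ {A : Finset (Fin n)} {i j : Fin n} (hi : i ∉ A) (hj : j ∉ A)
    (hij : i ≠ j) :
    zQ K n (insert i A) j + zQ K n A i = zQ K n (insert j A) i + zQ K n A j := by
  rw [zQ_of_notMem hi, zQ_of_notMem hj, zQ_of_notMem (by simp [hij.symm, hj]),
    zQ_of_notMem (by simp [hij, hi]), ← map_add, ← map_add]
  exact mkAlgHom_rel K (QnRel.add A i j hi hj hij)

theorem zQ_insert_mul_zQ {A : Finset (Fin n)} {i j : Fin n} (hi : i ∉ A) (hj : j ∉ A)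
    (hij : i ≠ j) :
    zQ K n (insert i A) j * zQ K n A i = zQ K n (insert j A) i * zQ K n A j := by
  rw [zQ_of_notMem hi, zQ_of_notMem hj, zQ_of_notMem (by simp [hij.symm, hj]),
    zQ_of_notMem (by simp [hij, hi]), ← map_mul, ← map_mul]
  exact mkAlgHom_rel K (QnRel.mul A i j hi hj hij)

variable (K) in
noncomputable def uAt (A : Finset (Fin n)) (i : Fin n) : Qn K n :=
  ∑ D ∈ (A.erase i).powerset, (-1 : Qn K n) ^ (#A - #D) * zQ K n D i

theorem uAt_eq_sum_sub {A : Finset (Fin n)} {i j : Fin n} (hi : i ∈ A) (hj : j ∈ A)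
    (hij : i ≠ j) :
    uAt K A i = ∑ E ∈ ((A.erase i).erase j).powerset,
      (-1 : Qn K n) ^ (#A - #E) * (zQ K n E i - zQ K n (insert j E) i) := by
  have hjA : j ∉ (A.erase i).erase j := notMem_erase j _
  rw [uAt, ← insert_erase (mem_erase.2 ⟨hij.symm, hj⟩), sum_powerset_insert hjA,
    ← sum_add_distrib, insert_erase (mem_erase.2 ⟨hij.symm, hj⟩)]
  refine sum_congr rfl fun E hE => ?_
  have hEA : #E < #A := card_lt_card <|
    ((mem_powerset.1 hE).trans (erase_subset j _)).trans_ssubset (erase_ssubset hi)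
  rw [card_insert_of_notMem fun h => hjA (mem_powerset.1 hE h), neg_one_pow_sub_succ hEA,
    neg_mul, mul_sub, sub_eq_add_neg]

theorem uAt_comm {A : Finset (Fin n)} {i j : Fin n} (hi : i ∈ A) (hj : j ∈ A) :
    uAt K A i = uAt K A j := by
  rcases eq_or_ne i j with rfl | hij
  · rfl
  rw [uAt_eq_sum_sub hi hj hij, uAt_eq_sum_sub hj hi hij.symm, erase_right_comm]
  refine sum_congr rfl fun E hE => ?_
  have hiE : i ∉ E := fun h => by simpa using mem_powerset.1 hE h
  have hjE : j ∉ E := fun h => by simpa using mem_powerset.1 hE h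
  congr 1
  rw [sub_eq_sub_iff_add_eq_add, add_comm, zQ_insert_add_zQ hiE hjE hij, add_comm]

theorem uQ_eq_uAt {A : Finset (Fin n)} {i : Fin n} (hi : i ∈ A) : uQ K n A = uAt K A i := by
  rw [uQ, dif_pos ⟨i, hi⟩]
  exact uAt_comm (min'_mem _ _) hi

theorem uAt_insert_self {D : Finset (Fin n)} {i : Fin n} (hi : i ∉ D) :
    uAt K (insert i D) i = -∑ E ∈ D.powerset, (-1 : Qn K n) ^ (#D - #E) * zQ K n E i := by
  rw [uAt, erase_insert hi, card_insert_of_notMem hi, ← sum_neg_distrib]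
  refine sum_congr rfl fun E hE => ?_
  rw [Nat.sub_add_comm (card_le_card (mem_powerset.1 hE)), pow_succ', neg_one_mul, neg_mul]

theorem zQ_eq_neg_sum_uQ {A : Finset (Fin n)} {i : Fin n} (hi : i ∉ A) :
    zQ K n A i = -∑ D ∈ A.powerset, uQ K n (insert i D) := by
  have hu : ∀ D ∈ A.powerset,
      uQ K n (insert i D) = -∑ E ∈ D.powerset, (-1 : Qn K n) ^ (#D - #E) * zQ K n E i :=
    fun D hD => by
      rw [uQ_eq_uAt (mem_insert_self i D), uAt_insert_self fun h => hi (mem_powerset.1 hD h)]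
  rw [sum_congr rfl hu, sum_neg_distrib, neg_neg, sum_powerset_sum_powerset_neg_one_pow]

variable (K) in
noncomputable def map (f : Fin m ↪ Fin n) : Qn K m →ₐ[K] Qn K n :=
  liftAlgHom K ⟨FreeAlgebra.lift K fun p => zQ K n (p.1.1.map f) (f p.1.2), fun x y r => by
    cases r with
    | add A i j hi hj hij =>
      simp only [map_add, FreeAlgebra.lift_ι_apply, map_insert]
      exact zQ_insert_add_zQ (by simpa using hi) (by simpa using hj) (f.injective.ne hij)
    | mul A i j hi hj hij =>
      simp only [map_mul, FreeAlgebra.lift_ι_apply, map_insert]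
      exact zQ_insert_mul_zQ (by simpa using hi) (by simpa using hj) (f.injective.ne hij)⟩

theorem map_zQ (f : Fin m ↪ Fin n) (A : Finset (Fin m)) (i : Fin m) :
    map K f (zQ K m A i) = zQ K n (A.map f) (f i) := by
  by_cases hi : i ∈ A
  · rw [zQ_of_mem hi, map_zero, zQ_of_mem (mem_map_of_mem f hi)]
  · rw [zQ_of_notMem hi, map, liftAlgHom_mkAlgHom_apply, FreeAlgebra.lift_ι_apply]

theorem map_uAt (f : Fin m ↪ Fin n) (A : Finset (Fin m)) (i : Fin m) :
    map K f (uAt K A i) = uAt K (A.map f) (f i) := by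
  simp only [uAt, map_sum, map_mul, map_pow, map_neg, map_one, map_zQ, ← map_erase,
    powerset_map, sum_map, RelEmbedding.coe_toEmbedding, mapEmbedding_apply, card_map]

theorem map_uQ (f : Fin m ↪ Fin n) (A : Finset (Fin m)) :
    map K f (uQ K m A) = uQ K n (A.map f) := by
  obtain rfl | ⟨i, hi⟩ := A.eq_empty_or_nonempty
  · simp [uQ]
  · rw [uQ_eq_uAt hi, uQ_eq_uAt (mem_map_of_mem f hi), map_uAt]

end Qn

namespace Qc

variable {K : Type*} [Field K] {n : ℕ} {G : Set (Finset (Fin n))}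

theorem mk_uQ_of_notMem {A : Finset (Fin n)} (hA : A.Nonempty) (hAG : A ∉ G) :
    mkAlgHom K (QcRel K n G) (uQ K n A) = 0 := by
  simpa using mkAlgHom_rel K (QcRel.rel A hA hAG)

theorem algHom_ext {B : Type*} [Semiring B] [Algebra K B] {φ ψ : Qc K n G →ₐ[K] B}
    (h : ∀ A i, i ∉ A → φ (mkAlgHom K _ (zQ K n A i)) = ψ (mkAlgHom K _ (zQ K n A i))) :
    φ = ψ :=
  ringQuot_ext' K _ _ <| Qn.algHom_ext h

theorem mk_zQ_filter {S : Set (Fin n)} [DecidablePred (· ∈ S)] (hG : ∀ C ∈ G, ↑C ⊆ S)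
    {A : Finset (Fin n)} {i : Fin n} (hi : i ∉ A) :
    mkAlgHom K (QcRel K n G) (zQ K n {x ∈ A | x ∈ S} i)
      = mkAlgHom K (QcRel K n G) (zQ K n A i) := by
  rw [Qn.zQ_eq_neg_sum_uQ hi, Qn.zQ_eq_neg_sum_uQ fun h => hi (mem_filter.1 h).1]
  simp only [map_neg, map_sum]
  congr 1
  refine sum_subset (powerset_mono.2 (filter_subset _ _)) fun D hDA hDS => ?_
  obtain ⟨x, hxD, hxS⟩ : ∃ x ∈ D, x ∉ S := by
    by_contra! hD
    exact hDS (mem_powerset.2 fun x hx => mem_filter.2 ⟨mem_powerset.1 hDA hx, hD x hx⟩)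
  exact mk_uQ_of_notMem (insert_nonempty i D) fun hmem => hxS (hG _ hmem (by simp [hxD]))

theorem mk_zQ_of_notMem_support {S : Set (Fin n)} (hG : ∀ C ∈ G, ↑C ⊆ S)
    {A : Finset (Fin n)} {i : Fin n} (hi : i ∉ A) (hiS : i ∉ S) :
    mkAlgHom K (QcRel K n G) (zQ K n A i) = 0 := by
  rw [Qn.zQ_eq_neg_sum_uQ hi, map_neg, map_sum, neg_eq_zero]
  exact sum_eq_zero fun D _ =>
    mk_uQ_of_notMem (insert_nonempty i D) fun hmem => hiS (hG _ hmem (by simp))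

end Qc

namespace Qn

variable (K : Type*) [Field K] {m n : ℕ} (f : Fin m ↪ Fin n) (F : Set (Finset (Fin m)))

noncomputable def restrictGen (B : Finset (Fin n)) (j : Fin n) : Qc K m F :=
  if h : j ∈ Set.range f then
    mkAlgHom K (QcRel K m F) (zQ K m (B.preimage f f.injective.injOn) (f.invOfMemRange ⟨j, h⟩))
  else 0

variable {K f F}

theorem restrictGen_apply (B : Finset (Fin n)) (i : Fin m) :
    restrictGen K f F B (f i)
      = mkAlgHom K (QcRel K m F) (zQ K m (B.preimage f f.injective.injOn) i) := by
  rw [restrictGen, dif_pos (Set.mem_range_self i), Function.Embedding.right_inv_of_invOfMemRange]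

theorem restrictGen_of_notMem_range (B : Finset (Fin n)) {j : Fin n} (hj : j ∉ Set.range f) :
    restrictGen K f F B j = 0 :=
  dif_neg hj

theorem restrictGen_insert_of_notMem_range (B : Finset (Fin n)) (i : Fin n) {j : Fin n}
    (hj : j ∉ Set.range f) : restrictGen K f F (insert j B) i = restrictGen K f F B i := by
  rcases em (i ∈ Set.range f) with ⟨i, rfl⟩ | hi
  · rw [restrictGen_apply, restrictGen_apply, preimage_insert_of_notMem_range f B hj]
  · rw [restrictGen_of_notMem_range _ hi, restrictGen_of_notMem_range _ hi]

theorem restrictGen_insert_add {B : Finset (Fin n)} {i j : Fin n} (hi : i ∉ B) (hj : j ∉ B)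
    (hij : i ≠ j) :
    restrictGen K f F (insert i B) j + restrictGen K f F B i
      = restrictGen K f F (insert j B) i + restrictGen K f F B j := by
  rcases em (i ∈ Set.range f) with ⟨i, rfl⟩ | hi'
  · rcases em (j ∈ Set.range f) with ⟨j, rfl⟩ | hj'
    · simp only [restrictGen_apply, preimage_insert_apply, ← map_add]
      rw [zQ_insert_add_zQ (by simpa using hi) (by simpa using hj) (ne_of_apply_ne f hij)]
    · simp [restrictGen_insert_of_notMem_range _ _ hj', restrictGen_of_notMem_range _ hj']
  · simp [restrictGen_insert_of_notMem_range _ _ hi', restrictGen_of_notMem_range _ hi']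

theorem restrictGen_insert_mul {B : Finset (Fin n)} {i j : Fin n} (hi : i ∉ B) (hj : j ∉ B)
    (hij : i ≠ j) :
    restrictGen K f F (insert i B) j * restrictGen K f F B i
      = restrictGen K f F (insert j B) i * restrictGen K f F B j := by
  rcases em (i ∈ Set.range f) with ⟨i, rfl⟩ | hi'
  · rcases em (j ∈ Set.range f) with ⟨j, rfl⟩ | hj'
    · simp only [restrictGen_apply, preimage_insert_apply, ← map_mul]
      rw [zQ_insert_mul_zQ (by simpa using hi) (by simpa using hj) (ne_of_apply_ne f hij)]
    · simp [restrictGen_insert_of_notMem_range _ _ hj', restrictGen_of_notMem_range _ hj']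
  · simp [restrictGen_insert_of_notMem_range _ _ hi', restrictGen_of_notMem_range _ hi']

variable (K f F) in
noncomputable def restrict : Qn K n →ₐ[K] Qc K m F :=
  liftAlgHom K ⟨FreeAlgebra.lift K fun p => restrictGen K f F p.1.1 p.1.2, fun x y r => by
    cases r with
    | add B i j hi hj hij =>
      simpa only [map_add, FreeAlgebra.lift_ι_apply] using restrictGen_insert_add hi hj hij
    | mul B i j hi hj hij =>
      simpa only [map_mul, FreeAlgebra.lift_ι_apply] using restrictGen_insert_mul hi hj hij⟩

theorem restrict_zQ {B : Finset (Fin n)} {j : Fin n} (hj : j ∉ B) :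
    restrict K f F (zQ K n B j) = restrictGen K f F B j := by
  rw [zQ_of_notMem hj, restrict, liftAlgHom_mkAlgHom_apply, FreeAlgebra.lift_ι_apply]

theorem restrict_comp_map : (restrict K f F).comp (map K f) = mkAlgHom K (QcRel K m F) :=
  algHom_ext fun A i hi => by
    rw [AlgHom.comp_apply, map_zQ, restrict_zQ (by simpa using hi), restrictGen_apply,
      preimage_map]

theorem restrict_uQ_of_notMem {B : Finset (Fin n)} (hB : B.Nonempty)
    (hBF : B ∉ Finset.map f '' F) : restrict K f F (uQ K n B) = 0 := by
  by_cases hBf : ↑B ⊆ Set.range f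
  · have hB_eq := map_preimage_of_subset_range f hBf
    rw [← hB_eq, ← map_uQ, ← AlgHom.comp_apply, restrict_comp_map]
    exact Qc.mk_uQ_of_notMem (map_nonempty.1 (hB_eq ▸ hB)) fun hmem => hBF ⟨_, hmem, hB_eq⟩
  · obtain ⟨t, htB, ht⟩ := Set.not_subset.1 hBf
    rw [uQ_eq_uAt htB, uAt, map_sum]
    refine sum_eq_zero fun D hD => ?_
    rw [map_mul, restrict_zQ fun h => notMem_erase t B (mem_powerset.1 hD h),
      restrictGen_of_notMem_range _ ht, mul_zero]

end Qn

namespace Qc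

variable (K : Type*) [Field K] {m n : ℕ} (f : Fin m ↪ Fin n) (F : Set (Finset (Fin m)))

noncomputable def map : Qc K m F →ₐ[K] Qc K n (Finset.map f '' F) :=
  liftAlgHom K ⟨(mkAlgHom K _).comp (Qn.map K f), fun x y r => by
    cases r with
    | rel A hA hAF =>
      rw [AlgHom.comp_apply, Qn.map_uQ, map_zero]
      exact mk_uQ_of_notMem hA.map fun ⟨B, hB, hBA⟩ => hAF (map_injective f hBA ▸ hB)⟩

noncomputable def restrict : Qc K n (Finset.map f '' F) →ₐ[K] Qc K m F :=
  liftAlgHom K ⟨Qn.restrict K f F, fun x y r => by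
    cases r with
    | rel B hB hBF => rw [Qn.restrict_uQ_of_notMem hB hBF, map_zero]⟩

variable {K f F}

theorem map_mk (x : Qn K m) :
    map K f F (mkAlgHom K (QcRel K m F) x) = mkAlgHom K _ (Qn.map K f x) :=
  liftAlgHom_mkAlgHom_apply _ _ _ _

theorem restrict_mk (x : Qn K n) :
    restrict K f F (mkAlgHom K _ x) = Qn.restrict K f F x :=
  liftAlgHom_mkAlgHom_apply _ _ _ _

theorem restrict_comp_map : (restrict K f F).comp (map K f F) = AlgHom.id K (Qc K m F) :=
  ringQuot_ext' K _ _ <| AlgHom.ext fun x => by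
    rw [AlgHom.comp_apply, AlgHom.comp_apply, map_mk, restrict_mk, ← AlgHom.comp_apply,
      Qn.restrict_comp_map, AlgHom.comp_apply, AlgHom.id_apply]

theorem map_comp_restrict :
    (map K f F).comp (restrict K f F) = AlgHom.id K (Qc K n (Finset.map f '' F)) := by
  classical
  have hsupp : ∀ C ∈ Finset.map f '' F, ↑C ⊆ Set.range f := by
    rintro _ ⟨A, -, rfl⟩
    simp
  refine algHom_ext fun B j hj => ?_
  rw [AlgHom.comp_apply, restrict_mk, Qn.restrict_zQ hj, AlgHom.id_apply]
  rcases em (j ∈ Set.range f) with ⟨i, rfl⟩ | hjf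
  · rw [Qn.restrictGen_apply, map_mk, Qn.map_zQ, map_eq_image, image_preimage,
      mk_zQ_filter hsupp hj]
  · rw [Qn.restrictGen_of_notMem_range _ hjf, map_zero, mk_zQ_of_notMem_support hsupp hj hjf]

variable (K f F) in
noncomputable def mapEquiv : Qc K m F ≃ₐ[K] Qc K n (Finset.map f '' F) :=
  AlgEquiv.ofAlgHom (map K f F) (restrict K f F) map_comp_restrict restrict_comp_map

theorem mapEquiv_uc (A : Finset (Fin m)) :
    mapEquiv K f F (uc K m F A) = uc K n (Finset.map f '' F) (A.map f) := by
  rw [mapEquiv, AlgEquiv.ofAlgHom_apply, uc, map_mk, Qn.map_uQ, uc]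

end Qc

theorem complex_iso_of_le_general (K : Type*) [Field K] (n₁ n₂ : ℕ) (h : n₁ ≤ n₂)
    (F : Set (Finset (Fin n₁))) :
    ∃ e : Qc K n₁ F ≃ₐ[K]
        Qc K n₂ (Finset.map (Fin.castLEEmb h) '' F),
      ∀ A ∈ F,
        e (uc K n₁ F A) =
          uc K n₂ (Finset.map (Fin.castLEEmb h) '' F)
            (A.map (Fin.castLEEmb h)) :=
  ⟨Qc.mapEquiv K (Fin.castLEEmb h) F, fun A _ => Qc.mapEquiv_uc A⟩

/-- Let `n₁ ≤ n₂`, let `F` be a complex with `n₁` nodes, and let `F'` be the same family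
regarded as a complex with `n₂` nodes via the inclusion `I_{n₁} ⊆ I_{n₂}`. Then there is
a `K`-algebra isomorphism `Q(F) ≅ Q(F')` sending the image of `u(A)` in `Q(F)` to the
image of `u(A)` in `Q(F')` for each `A ∈ F`. -/
theorem complex_iso_of_le (K : Type*) [Field K] (n₁ n₂ : ℕ) (h : n₁ ≤ n₂)
    (F : Set (Finset (Fin n₁)))
    (hFne : ∀ A ∈ F, A.Nonempty)
    (hFsing : ∀ i : Fin n₁, ({i} : Finset (Fin n₁)) ∈ F)
    (hFdown : ∀ A ∈ F, ∀ B ⊆ A, B.Nonempty → B ∈ F) :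
    ∃ e : Qc K n₁ F ≃ₐ[K]
        Qc K n₂ (Finset.map (Fin.castLEEmb h) '' F),
      ∀ A ∈ F,
        e (uc K n₁ F A) =
          uc K n₂ (Finset.map (Fin.castLEEmb h) '' F)
            (A.map (Fin.castLEEmb h)) :=
  complex_iso_of_le_general K n₁ n₂ h F
end
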